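/- Suppose the precedence underlying the polynomial path order ⊐pop* is admissible. If s ⊐pop* t and s is a value, then t is a (safe) subterm of s modulo ≈s, i.e., some proper subterm s' of s satisfies s' ≈s t; in particular t is a value. -/

import Mathlib

/-! # Preamble: term rewriting, polynomial path orders, predicative interpretations

Formalization of the setting of Avanzini & Moser, "Polynomial Path Orders".
Terms are modelled with explicit variables indexed by `ℕ` and a signature `F`;
arities (`ar`), the partitioning into defined symbols and constructors
(`isDef`), the safe mapping (`safe`, value `true` meaning "safe position",
0-based) and the precedence (a preorder `ge`) are explicit parameters.
Multiset comparisons inside inductively defined orders are stated in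
Skolemized form (the witnessing decompositions are constructor arguments). -/

set_option maxHeartbeats 1000000

namespace PPO

/-- First-order terms over a signature `F` (arities are tracked separately),
with variables indexed by `ℕ`. -/
inductive Tm (F : Type) : Type
  | var : ℕ → Tm F
  | app : F → List (Tm F) → Tm F

namespace Tm
variable {F : Type}

/-- The size `|t|` of a term: number of occurrences of variables and function symbols. -/
def size : Tm F → ℕ
  | .var _ => 1
  | .app _ ts => 1 + (ts.attach.map (fun t => size t.1)).sum
decreasing_by
  simp only [Tm.app.sizeOf_spec]; have := List.sizeOf_lt_of_mem t.2; omega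

/-- The depth `dp(t)` of a term. -/
def depth : Tm F → ℕ
  | .var _ => 1
  | .app _ ts => 1 + (ts.attach.map (fun t => depth t.1)).foldr max 0
decreasing_by
  simp only [Tm.app.sizeOf_spec]; have := List.sizeOf_lt_of_mem t.2; omega

/-- Applying a substitution to a term. -/
def subst (σ : ℕ → Tm F) : Tm F → Tm F
  | .var x => σ x
  | .app f ts => .app f (ts.attach.map (fun t => subst σ t.1))
decreasing_by
  simp only [Tm.app.sizeOf_spec]; have := List.sizeOf_lt_of_mem t.2; omega

/-- The list of variable occurrences of a term. -/
def varList : Tm F → List ℕ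
  | .var x => [x]
  | .app _ ts => (ts.attach.map (fun t => varList t.1)).foldr (· ++ ·) []
decreasing_by
  simp only [Tm.app.sizeOf_spec]; have := List.sizeOf_lt_of_mem t.2; omega

end Tm

variable {F : Type}

/-- Values: terms built from constructors (symbols `f` with `isDef f = false`)
and variables only. -/
inductive IsValue (isDef : F → Bool) : Tm F → Prop
  | var (x) : IsValue isDef (.var x)
  | app (f ts) : isDef f = false → (∀ t ∈ ts, IsValue isDef t) → IsValue isDef (.app f ts)

/-- Arity-correct terms. -/
inductive WFT (ar : F → ℕ) : Tm F → Prop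
  | var (x) : WFT ar (.var x)
  | app (f ts) : ts.length = ar f → (∀ t ∈ ts, WFT ar t) → WFT ar (.app f ts)

/-- Basic terms: a defined symbol applied to values. -/
def IsBasic (isDef : F → Bool) (t : Tm F) : Prop :=
  ∃ f ts, t = Tm.app f ts ∧ isDef f = true ∧ ∀ u ∈ ts, IsValue isDef u

/-- Subterm relation (reflexive). -/
inductive Sub : Tm F → Tm F → Prop
  | refl (t) : Sub t t
  | arg (f) (ts : List (Tm F)) (t u) : t ∈ ts → Sub t u → Sub (.app f ts) u

/-- Proper (strict) subterm. -/
def PSub (s u : Tm F) : Prop := ∃ f ts, s = Tm.app f ts ∧ ∃ t ∈ ts, Sub t u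

/-- A well-formed rewrite rule: arity-correct sides, the left-hand side is not a
variable, and all variables of the right-hand side occur in the left-hand side. -/
def WFRule (ar : F → ℕ) (ρ : Tm F × Tm F) : Prop :=
  WFT ar ρ.1 ∧ WFT ar ρ.2 ∧ (∀ x ∈ ρ.2.varList, x ∈ ρ.1.varList) ∧ ¬ ∃ x, ρ.1 = Tm.var x

/-- A (finite) TRS is modelled as a list of rewrite rules. -/
def WFTRS (ar : F → ℕ) (R : List (Tm F × Tm F)) : Prop := ∀ ρ ∈ R, WFRule ar ρ

/-- A constructor TRS: all left-hand sides are basic terms. -/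
def ConstructorTRS (ar : F → ℕ) (isDef : F → Bool) (R : List (Tm F × Tm F)) : Prop :=
  WFTRS ar R ∧ ∀ ρ ∈ R, IsBasic isDef ρ.1

/-- One-step rewrite relation: closure of the rules under contexts and substitutions. -/
inductive Rew (R : List (Tm F × Tm F)) : Tm F → Tm F → Prop
  | root (l r : Tm F) (σ : ℕ → Tm F) : (l, r) ∈ R → Rew R (l.subst σ) (r.subst σ)
  | congr (f) (ts₁ ts₂ : List (Tm F)) (s t : Tm F) : Rew R s t →
      Rew R (.app f (ts₁ ++ s :: ts₂)) (.app f (ts₁ ++ t :: ts₂))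

/-- Normal forms. -/
def IsNF (R : List (Tm F × Tm F)) (t : Tm F) : Prop := ∀ u, ¬ Rew R t u

/-- Innermost rewriting: the arguments of the contracted redex are normal forms. -/
inductive IRew (R : List (Tm F × Tm F)) : Tm F → Tm F → Prop
  | root (f : F) (ls : List (Tm F)) (r : Tm F) (σ : ℕ → Tm F) :
      (Tm.app f ls, r) ∈ R → (∀ l ∈ ls, IsNF R (l.subst σ)) →
      IRew R ((Tm.app f ls).subst σ) (r.subst σ)
  | congr (f) (ts₁ ts₂ : List (Tm F)) (s t : Tm F) : IRew R s t →
      IRew R (.app f (ts₁ ++ s :: ts₂)) (.app f (ts₁ ++ t :: ts₂))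

/-- `n`-fold composition of a relation. -/
def IterRel {α : Type*} (r : α → α → Prop) : ℕ → α → α → Prop
  | 0, a, b => a = b
  | n + 1, a, b => ∃ c, r a c ∧ IterRel r n c b

/-- Strict part `≻` of a preorder. -/
def PStrict {G : Type*} (ge : G → G → Prop) (f g : G) : Prop := ge f g ∧ ¬ ge g f

/-- Equivalence `∼` induced by a preorder. -/
def PEquiv {G : Type*} (ge : G → G → Prop) (f g : G) : Prop := ge f g ∧ ge g f

/-- A precedence is a preorder on the signature. -/
def IsPrecedence {G : Type*} (ge : G → G → Prop) : Prop :=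
  (∀ f, ge f f) ∧ ∀ f g h, ge f g → ge g h → ge f h

/-- Admissible precedence: a precedence such that equivalent symbols are both
defined or both constructors. -/
def Admissible (isDef : F → Bool) (ge : F → F → Prop) : Prop :=
  IsPrecedence ge ∧ ∀ f g, PEquiv ge f g → isDef f = isDef g

/-- A safe mapping: all argument positions of constructors are safe.
(`safe f i = true` means that the `i`-th argument position (0-based) of `f` is
safe; positions with `safe f i = false` are normal.) -/
def SafeMap (ar : F → ℕ) (isDef : F → Bool) (safe : F → ℕ → Bool) : Prop :=
  ∀ f, isDef f = false → ∀ i < ar f, safe f i = true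

/-- Safe equivalence `≈s`: equality up to equivalence of root symbols and
permutation of arguments, where the permutations respect the partitioning into
safe and normal argument positions. -/
inductive EqS (ge : F → F → Prop) (safe : F → ℕ → Bool) : Tm F → Tm F → Prop
  | refl (t) : EqS ge safe t t
  | app (f g) (ss ts : List (Tm F)) (π : Fin ss.length ≃ Fin ts.length) :
      PEquiv ge f g →
      (∀ i : Fin ss.length, EqS ge safe (ss.get i) (ts.get (π i))) →
      (∀ i : Fin ss.length, safe f i.val = safe g (π i).val) →
      EqS ge safe (.app f ss) (.app g ts)

/-- `Below ge f t` expresses `t ∈ T(F≺f, V)`: all function symbols occurring in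
`t` are strictly below `f` in the precedence. -/
inductive Below (ge : F → F → Prop) (f : F) : Tm F → Prop
  | var (x) : Below ge f (.var x)
  | app (g ts) : PStrict ge f g → (∀ t ∈ ts, Below ge f t) → Below ge f (.app g ts)

/-- Strict multiset extension of an order `gt` with compatible equivalence `eqv`
(Dershowitz–Manna extension on `eqv`-equivalence classes): `N` is obtained from
`M` by replacing a nonempty sub-multiset `X` by a multiset `Y` of elements each
of which lies strictly below some element of `X`; the remainders `Z₁, Z₂` agree
up to `eqv`. -/
def MulExt {α : Type*} (gt eqv : α → α → Prop) (M N : Multiset α) : Prop :=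
  ∃ Z₁ Z₂ X Y : Multiset α,
    M = Z₁ + X ∧ N = Z₂ + Y ∧ Multiset.Rel eqv Z₁ Z₂ ∧ X ≠ 0 ∧ ∀ y ∈ Y, ∃ x ∈ X, gt x y

/-- Weak multiset extension: strict decrease, or equality of the multisets of
equivalence classes. -/
def MulExtW {α : Type*} (gt eqv : α → α → Prop) (M N : Multiset α) : Prop :=
  MulExt gt eqv M N ∨ Multiset.Rel eqv M N

/-- The multiset of arguments of `f(ss)` at positions with safeness-flag `b`
(`b = false`: normal arguments, `b = true`: safe arguments). -/
def argsWhere (safe : F → ℕ → Bool) (b : Bool) (f : F) (ss : List (Tm F)) : Multiset (Tm F) :=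
  (((ss.zipIdx.map Prod.swap).filter (fun p => safe f p.1 = b)).map Prod.snd : List (Tm F))

/-- The auxiliary order `⊐sq` of the polynomial path order. -/
inductive GtSq (isDef : F → Bool) (ge : F → F → Prop) (safe : F → ℕ → Bool) :
    Tm F → Tm F → Prop
  | sub (f) (ss : List (Tm F)) (i : Fin ss.length) (t) :
      (isDef f = true → safe f i.val = false) →
      GtSq isDef ge safe (ss.get i) t → GtSq isDef ge safe (.app f ss) t
  | subE (f) (ss : List (Tm F)) (i : Fin ss.length) (t) :
      (isDef f = true → safe f i.val = false) →
      EqS ge safe (ss.get i) t → GtSq isDef ge safe (.app f ss) t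
  | prec (f g) (ss ts : List (Tm F)) : isDef f = true → PStrict ge f g →
      (∀ t ∈ ts, GtSq isDef ge safe (.app f ss) t) →
      GtSq isDef ge safe (.app f ss) (.app g ts)

/-- The polynomial path order `⊐pop*`.

The multiset comparisons of the `equiv` case (clause (3) of the definition)
are stated in Skolemized form: the decompositions witnessing the strict/weak
multiset decreases are explicit constructor arguments.  Constructors `equivS`
and `equivE` correspond to the two alternatives (strict decrease, resp.
equality of the multisets of equivalence classes) of the weak multiset
comparison of the safe arguments. -/
inductive GtPop (isDef : F → Bool) (ge : F → F → Prop) (safe : F → ℕ → Bool) :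
    Tm F → Tm F → Prop
  | sub (f) (ss : List (Tm F)) (i : Fin ss.length) (t) :
      GtPop isDef ge safe (ss.get i) t → GtPop isDef ge safe (.app f ss) t
  | subE (f) (ss : List (Tm F)) (i : Fin ss.length) (t) :
      EqS ge safe (ss.get i) t → GtPop isDef ge safe (.app f ss) t
  | prec (f g) (ss ts : List (Tm F)) : isDef f = true → PStrict ge f g →
      (∀ j : Fin ts.length, safe g j.val = false →
        GtSq isDef ge safe (.app f ss) (ts.get j)) →
      (∀ j : Fin ts.length, safe g j.val = true →
        GtPop isDef ge safe (.app f ss) (ts.get j)) →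
      (∀ j j' : Fin ts.length, safe g j.val = true → safe g j'.val = true →
        ¬ Below ge f (ts.get j) → ¬ Below ge f (ts.get j') → j = j') →
      GtPop isDef ge safe (.app f ss) (.app g ts)
  | equivS (f g) (ss ts : List (Tm F))
      (Z₁ Z₂ X : Multiset (Tm F)) (Y : List (Tm F)) (w : Fin Y.length → Tm F)
      (W₁ W₂ X' : Multiset (Tm F)) (Y' : List (Tm F)) (w' : Fin Y'.length → Tm F) :
      isDef f = true → PEquiv ge f g →
      argsWhere safe false f ss = Z₁ + X →
      argsWhere safe false g ts = Z₂ + (↑Y : Multiset (Tm F)) →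
      Multiset.Rel (EqS ge safe) Z₁ Z₂ → X ≠ 0 →
      (∀ j, w j ∈ X) → (∀ j, GtPop isDef ge safe (w j) (Y.get j)) →
      argsWhere safe true f ss = W₁ + X' →
      argsWhere safe true g ts = W₂ + (↑Y' : Multiset (Tm F)) →
      Multiset.Rel (EqS ge safe) W₁ W₂ → X' ≠ 0 →
      (∀ j, w' j ∈ X') → (∀ j, GtPop isDef ge safe (w' j) (Y'.get j)) →
      GtPop isDef ge safe (.app f ss) (.app g ts)
  | equivE (f g) (ss ts : List (Tm F))
      (Z₁ Z₂ X : Multiset (Tm F)) (Y : List (Tm F)) (w : Fin Y.length → Tm F) :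
      isDef f = true → PEquiv ge f g →
      argsWhere safe false f ss = Z₁ + X →
      argsWhere safe false g ts = Z₂ + (↑Y : Multiset (Tm F)) →
      Multiset.Rel (EqS ge safe) Z₁ Z₂ → X ≠ 0 →
      (∀ j, w j ∈ X) → (∀ j, GtPop isDef ge safe (w j) (Y.get j)) →
      Multiset.Rel (EqS ge safe) (argsWhere safe true f ss) (argsWhere safe true g ts) →
      GtPop isDef ge safe (.app f ss) (.app g ts)

/-- The polynomial path order with parameter substitution `⊐pop*ps`: as
`⊐pop*`, but in the `equiv` case the safe arguments `tⱼ` of the right-hand side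
are compared via `s ⊐pop*ps tⱼ` and must lie in `T(F≺f, V)`. -/
inductive GtPopPS (isDef : F → Bool) (ge : F → F → Prop) (safe : F → ℕ → Bool) :
    Tm F → Tm F → Prop
  | sub (f) (ss : List (Tm F)) (i : Fin ss.length) (t) :
      GtPopPS isDef ge safe (ss.get i) t → GtPopPS isDef ge safe (.app f ss) t
  | subE (f) (ss : List (Tm F)) (i : Fin ss.length) (t) :
      EqS ge safe (ss.get i) t → GtPopPS isDef ge safe (.app f ss) t
  | prec (f g) (ss ts : List (Tm F)) : isDef f = true → PStrict ge f g →
      (∀ j : Fin ts.length, safe g j.val = false →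
        GtSq isDef ge safe (.app f ss) (ts.get j)) →
      (∀ j : Fin ts.length, safe g j.val = true →
        GtPopPS isDef ge safe (.app f ss) (ts.get j)) →
      (∀ j j' : Fin ts.length, safe g j.val = true → safe g j'.val = true →
        ¬ Below ge f (ts.get j) → ¬ Below ge f (ts.get j') → j = j') →
      GtPopPS isDef ge safe (.app f ss) (.app g ts)
  | equiv (f g) (ss ts : List (Tm F))
      (Z₁ Z₂ X : Multiset (Tm F)) (Y : List (Tm F)) (w : Fin Y.length → Tm F) :
      isDef f = true → PEquiv ge f g →
      argsWhere safe false f ss = Z₁ + X →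
      argsWhere safe false g ts = Z₂ + (↑Y : Multiset (Tm F)) →
      Multiset.Rel (EqS ge safe) Z₁ Z₂ → X ≠ 0 →
      (∀ j, w j ∈ X) → (∀ j, GtPopPS isDef ge safe (w j) (Y.get j)) →
      (∀ j : Fin ts.length, safe g j.val = true →
        GtPopPS isDef ge safe (.app f ss) (ts.get j)) →
      (∀ j : Fin ts.length, safe g j.val = true → Below ge f (ts.get j)) →
      GtPopPS isDef ge safe (.app f ss) (.app g ts)

/-- A constructor TRS is predicative recursive w.r.t. a given admissible
precedence and safe mapping if all its rules are oriented by the induced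
polynomial path order. -/
def PredicativeRecursive (ar : F → ℕ) (isDef : F → Bool) (safe : F → ℕ → Bool)
    (ge : F → F → Prop) (R : List (Tm F × Tm F)) : Prop :=
  ConstructorTRS ar isDef R ∧ Admissible isDef ge ∧ SafeMap ar isDef safe ∧
    ∀ ρ ∈ R, GtPop isDef ge safe ρ.1 ρ.2

/-- The maximum of the depths of the normal arguments of `f(ss)`. -/
def maxNormalDepth (safe : F → ℕ → Bool) (f : F) (ss : List (Tm F)) : ℕ :=
  (((ss.zipIdx.map Prod.swap).filter (fun p => safe f p.1 = false)).map (fun p => Tm.depth p.2)).foldr max 0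

/-- One-hole contexts. -/
inductive Ctx (F : Type) : Type
  | hole : Ctx F
  | app : F → List (Tm F) → Ctx F → List (Tm F) → Ctx F

/-- Plugging a term into a context. -/
def Ctx.fill : Ctx F → Tm F → Tm F
  | .hole, s => s
  | .app f ts₁ C ts₂, s => .app f (ts₁ ++ [C.fill s] ++ ts₂)

/-! ## Terms with sequence arguments and sequences -/

/-- Terms with sequence arguments, and sequences, over a (normalised) signature
`G`.  Well-formedness is captured by `IsSTm`/`IsSSeq` below. -/
inductive SExp (G : Type) : Type
  | var : ℕ → SExp G
  | app : G → List (SExp G) → SExp G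
  | lst : List (SExp G) → SExp G

namespace SExp
variable {G : Type}

/-- View an element of `T ∪ S` as a list of elements (a term is a singleton). -/
def toL : SExp G → List (SExp G)
  | .lst ts => ts
  | .var x => [.var x]
  | .app f as => [.app f as]

/-- Concatenation of terms/sequences. -/
def cat (a b : SExp G) : SExp G := .lst (a.toL ++ b.toL)

/-- Concatenation `c₁ @ ⋯ @ cₙ` of a list of terms/sequences. -/
def catAll (cs : List (SExp G)) : SExp G := .lst ((cs.map toL).foldr (· ++ ·) [])

/-- The length `len(a)`: the number of elements. -/
def slen (a : SExp G) : ℕ := a.toL.length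

/-- The width `w(a)`. -/
def width : SExp G → ℕ
  | .var _ => 1
  | .app _ as => (as.attach.map (fun a => width a.1)).foldr max 1
  | .lst ts => (ts.attach.map (fun t => width t.1)).sum
decreasing_by
  · simp only [SExp.app.sizeOf_spec]; have := List.sizeOf_lt_of_mem a.2; omega
  · simp only [SExp.lst.sizeOf_spec]; have := List.sizeOf_lt_of_mem t.2; omega

end SExp

/-- Ground terms/sequences: no variable occurs. -/
inductive SGround {G : Type} : SExp G → Prop
  | app (f) (as : List (SExp G)) : (∀ a ∈ as, SGround a) → SGround (.app f as)
  | lst (ts : List (SExp G)) : (∀ t ∈ ts, SGround t) → SGround (.lst ts)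

mutual
/-- Well-formed terms with sequence arguments (w.r.t. arities `nar` on `G`). -/
inductive IsSTm {G : Type} (nar : G → ℕ) : SExp G → Prop
  | var (x) : IsSTm nar (.var x)
  | app (f) (as : List (SExp G)) : as.length = nar f →
      (∀ a ∈ as, IsSSeq nar a) → IsSTm nar (.app f as)

/-- Well-formed sequences: lists of well-formed terms. -/
inductive IsSSeq {G : Type} (nar : G → ℕ) : SExp G → Prop
  | lst (ts : List (SExp G)) : (∀ t ∈ ts, IsSTm nar t) → IsSSeq nar (.lst ts)
end

/-- Equivalence `≈` on terms/sequences: equality up to permutation of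
arguments/elements and equivalence of root symbols. -/
inductive SEqv {G : Type} (ge : G → G → Prop) : SExp G → SExp G → Prop
  | var (x) : SEqv ge (.var x) (.var x)
  | app (f g) (as bs : List (SExp G)) (π : Fin as.length ≃ Fin bs.length) :
      PEquiv ge f g → (∀ i, SEqv ge (as.get i) (bs.get (π i))) →
      SEqv ge (.app f as) (.app g bs)
  | lst (ts us : List (SExp G)) (π : Fin ts.length ≃ Fin us.length) :
      (∀ i, SEqv ge (ts.get i) (us.get (π i))) → SEqv ge (.lst ts) (.lst us)

/-- The finite approximations `⊐ₖ,ₗ` of the auxiliary order of the polynomial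
path order on sequences.  In the `lst` case (clause (4)), the weak comparisons
`aᵢ ⊒ cᵢ` are recorded via an explicit strictness marker `str`. -/
inductive GtA {G : Type} (ge : G → G → Prop) (k : ℕ) : ℕ → SExp G → SExp G → Prop
  | sub (l f) (as : List (SExp G)) (i : Fin as.length) (b) :
      GtA ge k l (as.get i) b → GtA ge k l (.app f as) b
  | subE (l f) (as : List (SExp G)) (i : Fin as.length) (b) :
      SEqv ge (as.get i) b → GtA ge k l (.app f as) b
  | prec (l f g) (as bs : List (SExp G)) : PStrict ge f g →
      (∀ b ∈ bs, GtA ge k l (.app f as) b) → bs.length ≤ k →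
      GtA ge k (l + 1) (.app f as) (.app g bs)
  | toLst (l f) (as bs : List (SExp G)) :
      (∀ b ∈ bs, GtA ge k l (.app f as) b) →
      bs.length ≤ SExp.width (.app f as) + k →
      GtA ge k (l + 1) (.app f as) (.lst bs)
  | lst (l) (as bs cs : List (SExp G)) (h : cs.length = as.length)
      (str : Fin as.length → Bool) (i₀ : Fin as.length) :
      SEqv ge (.lst bs) (SExp.catAll cs) →
      (∀ i : Fin as.length, str i = true →
        GtA ge k l (as.get i) (cs.get (Fin.cast h.symm i))) →
      (∀ i : Fin as.length, str i = false →
        SEqv ge (as.get i) (cs.get (Fin.cast h.symm i))) →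
      str i₀ = true →
      bs.length ≤ SExp.width (.lst as) + k →
      GtA ge k l (.lst as) (.lst bs)

/-- The finite approximations `≫ₖ,ₗ` of the polynomial path order on sequences:
the least extension of `⊐ₖ,ₗ` by the clauses (b1)–(b4).  The strict multiset
comparison in the `equiv` case (b2) is stated in Skolemized form. -/
inductive GtF {G : Type} (ge : G → G → Prop) (k : ℕ) : ℕ → SExp G → SExp G → Prop
  | base (l a b) : GtA ge k l a b → GtF ge k l a b
  | sub (l f) (as : List (SExp G)) (i : Fin as.length) (b) :
      GtF ge k l (as.get i) b → GtF ge k l (.app f as) b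
  | equiv (l f g) (as bs : List (SExp G))
      (Z₁ Z₂ X : Multiset (SExp G)) (Y : List (SExp G)) (w : Fin Y.length → SExp G) :
      PEquiv ge f g →
      (↑as : Multiset (SExp G)) = Z₁ + X →
      (↑bs : Multiset (SExp G)) = Z₂ + (↑Y : Multiset (SExp G)) →
      Multiset.Rel (SEqv ge) Z₁ Z₂ → X ≠ 0 →
      (∀ j, w j ∈ X) → (∀ j, GtF ge k l (w j) (Y.get j)) →
      bs.length ≤ k →
      GtF ge k l (.app f as) (.app g bs)
  | toLst (l f) (as bs : List (SExp G)) (j₀ : Fin bs.length) :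
      GtF ge k l (.app f as) (bs.get j₀) →
      (∀ j : Fin bs.length, j ≠ j₀ → GtA ge k l (.app f as) (bs.get j)) →
      bs.length ≤ SExp.width (.app f as) + k →
      GtF ge k (l + 1) (.app f as) (.lst bs)
  | lst (l) (as bs cs : List (SExp G)) (h : cs.length = as.length)
      (str : Fin as.length → Bool) (i₀ : Fin as.length) :
      SEqv ge (.lst bs) (SExp.catAll cs) →
      (∀ i : Fin as.length, str i = true →
        GtF ge k l (as.get i) (cs.get (Fin.cast h.symm i))) →
      (∀ i : Fin as.length, str i = false →
        SEqv ge (as.get i) (cs.get (Fin.cast h.symm i))) →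
      str i₀ = true →
      bs.length ≤ SExp.width (.lst as) + k →
      GtF ge k l (.lst as) (.lst bs)

/-! ## The normalised signature and predicative interpretations -/

/-- Lifting of a precedence on `F` to the normalised signature `Fn ∪ {•}`
(modelled as `Option F`, where `some f` is `fn` and `none` is the fresh
constant `•`): `fn ≿ gn` iff `f ≿ g`, and every `fn` lies strictly above `•`. -/
def liftge (ge : F → F → Prop) : Option F → Option F → Prop
  | some f, some g => ge f g
  | _, none => True
  | none, some _ => False

/-- The (0-based) normal argument positions of `f`, in increasing order. -/
def normalIdxs (ar : F → ℕ) (safe : F → ℕ → Bool) (f : F) : List ℕ :=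
  (List.range (ar f)).filter (fun i => safe f i = false)

/-- The (0-based) safe argument positions of `f`, in increasing order. -/
def safeIdxs (ar : F → ℕ) (safe : F → ℕ → Bool) (f : F) : List ℕ :=
  (List.range (ar f)).filter (fun i => safe f i = true)

/-- Arities on the normalised signature: `fn` keeps only the normal argument
positions of `f`; the fresh constant `•` has no arguments. -/
def snar (ar : F → ℕ) (safe : F → ℕ → Bool) : Option F → ℕ
  | none => 0
  | some f => (normalIdxs ar safe f).length

/-- The fresh constant `•`. -/
def bullet {F : Type} : SExp (Option F) := .app none []

/-- The tally sequence `n̂` encoding the natural number `n`. -/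
def tally {F : Type} (n : ℕ) : SExp (Option F) := .lst (List.replicate n bullet)

/-- The norm `‖t‖` of a term: like the depth, but only safe argument positions
are taken into account. -/
def norm (safe : F → ℕ → Bool) : Tm F → ℕ
  | .var _ => 1
  | .app f ss =>
      1 + ((((ss.attach.map (fun t => norm safe t.1)).zipIdx.map Prod.swap).filter
              (fun p => safe f p.1 = true)).map Prod.snd).foldr max 0
decreasing_by
  simp only [Tm.app.sizeOf_spec]; have := List.sizeOf_lt_of_mem t.2; omega

open Classical in
/-- The predicative interpretation `S` w.r.t. a TRS `R`:
`S(t) = []` if `t` is a normal form of `R`, and otherwise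
`S(f(s₁,…,sₖ; sₖ₊₁,…,sₖ₊ₗ)) = [fn(N(s₁),…,N(sₖ))] @ S(sₖ₊₁) @ ⋯ @ S(sₖ₊ₗ)`,
where `N(t) = S(t) @ ‖t‖̂`. -/
noncomputable def Sint (R : List (Tm F × Tm F)) (ar : F → ℕ) (safe : F → ℕ → Bool) :
    Tm F → SExp (Option F)
  | .var _ => .lst []
  | .app f ss =>
      if IsNF R (Tm.app f ss) then .lst []
      else
        let sInt := ss.attach.map (fun t => Sint R ar safe t.1)
        let nInt := ss.attach.map (fun t =>
          SExp.cat (Sint R ar safe t.1) (tally (norm safe t.1)))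
        .lst (SExp.app (some f)
                ((normalIdxs ar safe f).map (fun i => nInt.getD i (.lst []))) ::
              ((safeIdxs ar safe f).map
                (fun i => (sInt.getD i (.lst [])).toL)).foldr (· ++ ·) [])
decreasing_by
  all_goals (simp only [Tm.app.sizeOf_spec]; have := List.sizeOf_lt_of_mem t.2; omega)

/-- The predicative interpretation `N`: `N(t) = S(t) @ ‖t‖̂`. -/
noncomputable def Nint (R : List (Tm F × Tm F)) (ar : F → ℕ) (safe : F → ℕ → Bool)
    (t : Tm F) : SExp (Option F) :=
  SExp.cat (Sint R ar safe t) (tally (norm safe t))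

/-! ## Measures -/

/-- `hFun k c ms = Σᵢ srt(i)·c^(k−i)` where `srt(i)` is the `i`-th largest
entry of `ms` (1-based): the order-preserving homomorphism `h(k,n,c)`. -/
def hFun (k c : ℕ) (ms : List ℕ) : ℕ :=
  (((ms.insertionSort (· ≥ ·)).zipIdx.map Prod.swap).map (fun p => p.2 * c ^ (k - 1 - p.1))).sum

/-- `M(k,n)(a₁,…,aₙ) = h(k,n,c)(Gf a₁,…,Gf aₙ)` with `c = 1 + max Gf aᵢ`. -/
def Mfun {α : Type*} (Gf : α → ℕ) (k : ℕ) (as : List α) : ℕ :=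
  hFun k (1 + (as.map Gf).foldr max 0) (as.map Gf)

/-- `Gf` measures the length of maximal descending `ord`-chains on ground
elements: `Gf a = sup {Gf b + 1 | b ground, a ord b}`. -/
def IsChainMeasure {β : Type*} (ground : β → Prop) (ord : β → β → Prop) (Gf : β → ℕ) : Prop :=
  ∀ a, ground a → Gf a = sSup {m | ∃ b, ground b ∧ ord a b ∧ m = Gf b + 1}

/-- `rk` is the rank function of the precedence `ge`:
`rk f = max({0} ∪ {1 + rk g | f ≻ g})`. -/
def IsRank {G : Type*} (ge : G → G → Prop) (rk : G → ℕ) : Prop :=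
  ∀ f, rk f = sSup {m | ∃ g, PStrict ge f g ∧ m = rk g + 1}

/-- The constants `d(k,p)`. -/
def dconst (k : ℕ) : ℕ → ℕ
  | 0 => k + 1
  | p + 1 => (dconst k p * k) ^ (k + 1) + 1

/-- The constants `c(k,p)`. -/
def cconst (k : ℕ) : ℕ → ℕ
  | 0 => k ^ k
  | p + 1 => (cconst k p * k) ^ ((Finset.Icc 1 k).sum fun i => (k * dconst k p) ^ i)

/-- The auxiliary functions `g(k,l,p)(m)` (here `gfun k p l m`). -/
def gfun (k p : ℕ) : ℕ → ℕ → ℕ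
  | l, m =>
    if p = 0 then k ^ l * m ^ l
    else
      match l with
      | 0 => m
      | 1 => m
      | l' + 2 => cconst k (p - 1) * (m * gfun k p (l' + 1) m) ^ (k * dconst k (p - 1))

end PPO

/-! On a constructor-rooted term only the subterm clauses of `⊐pop*` can fire, because every
other clause requires a defined root symbol; so by induction on `s ⊐pop* t` the term `t` is
`≈s`-equivalent to a proper subterm of the value `s`. Subterms of values are values, and
admissibility makes `≈s` preserve values, since equivalent symbols are both constructors. -/

namespace PPO

section

variable {F : Type} {isDef : F → Bool} {ge : F → F → Prop} {safe : F → ℕ → Bool}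

theorem IsValue.isDef_eq_false {f : F} {ss : List (Tm F)} (h : IsValue isDef (.app f ss)) :
    isDef f = false := by
  cases h with
  | app _ _ hf _ => exact hf

theorem IsValue.of_mem {f : F} {ss : List (Tm F)} {t : Tm F} (h : IsValue isDef (.app f ss))
    (ht : t ∈ ss) : IsValue isDef t := by
  cases h with
  | app _ _ _ hargs => exact hargs t ht

theorem IsValue.of_sub {s u : Tm F} (hs : IsValue isDef s) (h : Sub s u) : IsValue isDef u := by
  induction h with
  | refl => exact hs
  | arg _ _ _ _ hmem _ ih => exact ih (hs.of_mem hmem)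

theorem IsValue.of_eqS (hdef : ∀ f g, PEquiv ge f g → isDef f = isDef g) {u t : Tm F}
    (h : EqS ge safe u t) (hu : IsValue isDef u) : IsValue isDef t := by
  induction h with
  | refl => exact hu
  | app f g ss ts π hfg _ _ ih =>
    refine .app g ts (hdef f g hfg ▸ hu.isDef_eq_false) fun t ht => ?_
    obtain ⟨j, rfl⟩ := List.mem_iff_get.mp ht
    simpa using ih (π.symm j) (hu.of_mem (ss.get_mem _))

theorem PSub.sub {s u : Tm F} (h : PSub s u) : Sub s u := by
  obtain ⟨f, ss, rfl, t, hmem, hsub⟩ := h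
  exact .arg f ss t u hmem hsub

theorem GtPop.exists_pSub_eqS_of_isValue {s t : Tm F} (h : GtPop isDef ge safe s t)
    (hs : IsValue isDef s) : ∃ s', PSub s s' ∧ EqS ge safe s' t := by
  induction h with
  | sub f ss i t _ ih =>
    obtain ⟨s', hsub, heq⟩ := ih (hs.of_mem (ss.get_mem i))
    exact ⟨s', ⟨f, ss, rfl, _, ss.get_mem i, hsub.sub⟩, heq⟩
  | subE f ss i t heq => exact ⟨_, ⟨f, ss, rfl, _, ss.get_mem i, .refl _⟩, heq⟩
  | prec _ _ _ _ hf | equivS _ _ _ _ _ _ _ _ _ _ _ _ _ _ hf | equivE _ _ _ _ _ _ _ _ _ hf =>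
    simp [hs.isDef_eq_false] at hf

end

/-- Lemma 16 of the paper.  Suppose the precedence underlying
`⊐pop*` is admissible.  If `s ⊐pop* t` and `s` is a value, then some proper
subterm `s'` of `s` satisfies `s' ≈s t`; in particular `t` is a value. -/
theorem gtpop_on_values_is_subterm
    {F : Type} (ar : F → ℕ) (isDef : F → Bool) (safe : F → ℕ → Bool)
    (ge : F → F → Prop)
    (hadm : Admissible isDef ge) (hsm : SafeMap ar isDef safe)
    (s t : Tm F) (h : GtPop isDef ge safe s t) (hs : IsValue isDef s) :
    (∃ s', PSub s s' ∧ EqS ge safe s' t) ∧ IsValue isDef t := by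
  obtain ⟨s', hsub, heq⟩ := h.exists_pSub_eqS_of_isValue hs
  exact ⟨⟨s', hsub, heq⟩, (hs.of_sub hsub.sub).of_eqS hadm.2 heq⟩

end PPO
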